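/- arXiv:2412.03694 — 3 statements merged into one kernel-verified Lean document; each statement's English description precedes it below -/
import Mathlib

section
/- Let r ≥ 1 and let (v_1,…,v_r) be a system of linear functionals on ℂ[x] whose moment matrix M admits a Gauss–Borel factorisation M = A·B, and let C be the (upper-triangular) inverse of B, i.e. Σ_{k=ℓ}^{n} B_{ℓ,k} C_{k,n} = δ_{ℓ,n}. Define, for each n ∈ ℕ and 1 ≤ j ≤ r, the polynomial C_{n,j}(x) := Σ_{m : rm+j−1 ≤ n} C_{rm+j−1, n} x^m, and the linear functional q_n := Σ_{j=1}^{r} C_{n,j}(x)·v_j (where for a polynomial p and functional v, p·v denotes f ↦ ⟨v, p f⟩). Then ⟨q_k, x^n⟩ = A_{n,k} for all n, k ∈ ℕ; in particular ⟨q_n, x^m⟩ = 0 for 0 ≤ m ≤ n−1 and ⟨q_n, x^n⟩ = 1, and for n = rm+k with 0 ≤ k ≤ r−1 one has deg C_{n,j} ≤ m for 1 ≤ j ≤ k+1 and deg C_{n,j} ≤ m−1 for k+2 ≤ j ≤ r, so (q_n) is the sequence of type I linear forms on the step-line with respect to (v_1,…,v_r). -/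
open Polynomial Finset

noncomputable section

/-- A linear functional on `ℂ[x]`. -/
abbrev LF := Polynomial ℂ →ₗ[ℂ] ℂ

/-- The moment matrix of a system of `r` linear functionals (0-indexed:
`v j` is the paper's `v_{j+1}`): entry `(n, r*k+j)` is `⟨v_{j+1}, x^{k+n}⟩`. -/
def momentMatrix (r : ℕ) (v : ℕ → LF) (n ℓ : ℕ) : ℂ :=
  v (ℓ % r) (Polynomial.X ^ (ℓ / r + n))

/-- A Gauss–Borel factorisation `M = A·B` of the moment matrix. -/
structure GaussBorel (r : ℕ) (v : ℕ → LF) (A B : ℕ → ℕ → ℂ) : Prop where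
  A_diag : ∀ n, A n n = 1
  A_upper : ∀ n ℓ, n < ℓ → A n ℓ = 0
  B_lower : ∀ n ℓ, ℓ < n → B n ℓ = 0
  B_diag : ∀ n, B n n ≠ 0
  factor : ∀ n ℓ, momentMatrix r v n ℓ = ∑ k ∈ Finset.range (n + 1), A n k * B k ℓ

/-- The polynomial `C_{n,j+1}(x) = Σ_{m : r m + j ≤ n} C_{r m + j, n} x^m`
(0-indexed in `j`: this is the paper's `C_{n,j+1}`). -/
def Cpoly (r : ℕ) (Cm : ℕ → ℕ → ℂ) (n j : ℕ) : Polynomial ℂ :=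
  ∑ m ∈ (Finset.range (n + 1)).filter (fun m => r * m + j ≤ n),
    Polynomial.C (Cm (r * m + j) n) * Polynomial.X ^ m

/-! `⟨q_k, x^n⟩ = Σ_ℓ C_{ℓ,k} M_{n,ℓ}` is the `(n, k)` entry of `M C = A B C = A`,
because the pair `(j, m)` with `ℓ = r m + j` runs exactly once over each column index `ℓ ≤ k`.
The degree bounds only record which monomials can occur in `C_{n,j}`. -/

section Triangular

variable {R : Type*} [CommSemiring R] {M A B C : ℕ → ℕ → R}

theorem sum_range_mul_eq_ite_of_upper (hB : ∀ i ℓ, ℓ < i → B i ℓ = 0)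
    (hBC : ∀ i k, ∑ ℓ ∈ Icc i k, B i ℓ * C ℓ k = if i = k then 1 else 0) (i k : ℕ) :
    ∑ ℓ ∈ range (k + 1), B i ℓ * C ℓ k = if i = k then 1 else 0 := by
  by_cases hik : i ≤ k
  · rw [← hBC i k]
    refine (sum_subset (fun ℓ hℓ => ?_) fun ℓ hℓ hℓ' => ?_).symm
    · simp only [mem_Icc] at hℓ
      simp only [mem_range]
      omega
    · simp only [mem_range] at hℓ
      simp only [mem_Icc, not_and, not_le] at hℓ'
      rw [hB i ℓ (by omega), zero_mul]
  · rw [if_neg (by omega)]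
    refine sum_eq_zero fun ℓ hℓ => ?_
    simp only [mem_range] at hℓ
    rw [hB i ℓ (by omega), zero_mul]

theorem sum_range_mul_eq_of_factor (hA : ∀ n k, n < k → A n k = 0)
    (hB : ∀ i ℓ, ℓ < i → B i ℓ = 0)
    (hM : ∀ n ℓ, M n ℓ = ∑ i ∈ range (n + 1), A n i * B i ℓ)
    (hBC : ∀ i k, ∑ ℓ ∈ Icc i k, B i ℓ * C ℓ k = if i = k then 1 else 0) (n k : ℕ) :
    ∑ ℓ ∈ range (k + 1), C ℓ k * M n ℓ = A n k := by
  calc ∑ ℓ ∈ range (k + 1), C ℓ k * M n ℓ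
      = ∑ i ∈ range (n + 1), A n i * ∑ ℓ ∈ range (k + 1), B i ℓ * C ℓ k := by
        simp_rw [hM, mul_sum]
        rw [sum_comm]
        exact sum_congr rfl fun i _ => sum_congr rfl fun ℓ _ => by ring
    _ = ∑ i ∈ range (n + 1), if k = i then A n i else 0 := by
        simp_rw [sum_range_mul_eq_ite_of_upper hB hBC, mul_ite, mul_one, mul_zero, eq_comm]
    _ = A n k := by
        rw [sum_ite_eq]
        split_ifs with hk
        · rfl
        · exact (hA n k (by simpa using hk)).symm

end Triangular

theorem sum_range_sum_filter_mul_add {α : Type*} [AddCommMonoid α] {r : ℕ} (hr : 0 < r)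
    (f : ℕ → α) (k : ℕ) :
    ∑ j ∈ range r, ∑ m ∈ (range (k + 1)).filter (fun m => r * m + j ≤ k), f (r * m + j) =
      ∑ ℓ ∈ range (k + 1), f ℓ := by
  rw [sum_sigma']
  refine sum_nbij' (fun p => r * p.2 + p.1) (fun ℓ => ⟨ℓ % r, ℓ / r⟩)
    (fun ⟨j, m⟩ hp => ?_) (fun ℓ hℓ => ?_) (fun ⟨j, m⟩ hp => ?_)
    (fun ℓ _ => Nat.div_add_mod ℓ r) (fun _ _ => rfl)
  · simp only [mem_sigma, mem_range, mem_filter] at hp ⊢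
    omega
  · simp only [mem_range] at hℓ
    simp only [mem_sigma, mem_range, mem_filter]
    have := Nat.div_add_mod ℓ r
    have := Nat.div_le_self ℓ r
    exact ⟨Nat.mod_lt _ hr, by omega, by omega⟩
  · simp only [mem_sigma, mem_range, mem_filter] at hp
    simp [Nat.mod_eq_of_lt hp.1, Nat.mul_add_div hr, Nat.div_eq_of_lt hp.1]

theorem momentMatrix_mul_add {r : ℕ} (v : ℕ → LF) {j : ℕ} (hj : j < r) (n m : ℕ) :
    momentMatrix r v n (r * m + j) = v j (X ^ (m + n)) := by
  rw [momentMatrix, Nat.mul_add_mod, Nat.mod_eq_of_lt hj, Nat.mul_add_div (by omega),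
    Nat.div_eq_of_lt hj, add_zero]

theorem apply_Cpoly_mul_X_pow {r : ℕ} (v : ℕ → LF) (Cm : ℕ → ℕ → ℂ) {j : ℕ} (hj : j < r)
    (k n : ℕ) :
    v j (Cpoly r Cm k j * X ^ n) =
      ∑ m ∈ (range (k + 1)).filter (fun m => r * m + j ≤ k),
        Cm (r * m + j) k * momentMatrix r v n (r * m + j) := by
  rw [Cpoly, sum_mul, map_sum]
  refine sum_congr rfl fun m _ => ?_
  rw [momentMatrix_mul_add v hj, mul_assoc, ← pow_add, ← smul_eq_C_mul, map_smul, smul_eq_mul]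

theorem sum_apply_Cpoly_mul_X_pow {r : ℕ} (hr : 0 < r) (v : ℕ → LF) (Cm : ℕ → ℕ → ℂ)
    (k n : ℕ) :
    ∑ j ∈ range r, v j (Cpoly r Cm k j * X ^ n) =
      ∑ ℓ ∈ range (k + 1), Cm ℓ k * momentMatrix r v n ℓ := by
  rw [← sum_range_sum_filter_mul_add hr]
  exact sum_congr rfl fun j hj => apply_Cpoly_mul_X_pow v Cm (mem_range.mp hj) k n

theorem degree_Cpoly_lt (r : ℕ) (Cm : ℕ → ℕ → ℂ) {n j d : ℕ} (h : n < r * d + j) :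
    (Cpoly r Cm n j).degree < d := by
  refine (degree_sum_le _ _).trans_lt
    ((Finset.sup_lt_iff (WithBot.bot_lt_coe d)).mpr fun m hm => ?_)
  simp only [mem_filter, mem_range] at hm
  refine (degree_C_mul_X_pow_le _ _).trans_lt ?_
  exact Nat.cast_lt.mpr (Nat.lt_of_mul_lt_mul_left (a := r) (by omega))

theorem stmt1_general (r : ℕ) (hr : 1 ≤ r) (v : ℕ → LF) (A B Cm : ℕ → ℕ → ℂ)
    (hGB : GaussBorel r v A B)
    (hCinv : ∀ ℓ n, ∑ k ∈ Finset.Icc ℓ n, B ℓ k * Cm k n = if ℓ = n then 1 else 0) :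
    -- `⟨q_k, x^n⟩ = A_{n,k}` where `q_k := Σ_{j<r} C_{k,j+1}(x)·v_{j+1}`
    (∀ n k, ∑ j ∈ Finset.range r, v j (Cpoly r Cm k j * Polynomial.X ^ n) = A n k) ∧
    -- in particular `⟨q_n, x^m⟩ = 0` for `m < n` and `⟨q_n, x^n⟩ = 1`
    (∀ n m, m < n → ∑ j ∈ Finset.range r, v j (Cpoly r Cm n j * Polynomial.X ^ m) = 0) ∧
    (∀ n, ∑ j ∈ Finset.range r, v j (Cpoly r Cm n j * Polynomial.X ^ n) = 1) ∧
    -- degree bounds: for `n = r m + k` with `k < r`, `deg C_{n,j+1} ≤ m` for `j ≤ k`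
    -- and `deg C_{n,j+1} ≤ m − 1` for `k < j < r`
    (∀ m k, k < r →
      (∀ j, j ≤ k → (Cpoly r Cm (r * m + k) j).degree ≤ (m : WithBot ℕ)) ∧
      (∀ j, k < j → j < r → (Cpoly r Cm (r * m + k) j).degree < (m : WithBot ℕ))) := by
  have pairing (n k : ℕ) : ∑ j ∈ range r, v j (Cpoly r Cm k j * X ^ n) = A n k := by
    rw [sum_apply_Cpoly_mul_X_pow hr]
    exact sum_range_mul_eq_of_factor hGB.A_upper hGB.B_lower hGB.factor hCinv n k
  refine ⟨pairing, fun n m h => (pairing m n).trans (hGB.A_upper m n h),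
    fun n => (pairing n n).trans (hGB.A_diag n),
    fun m k hk => ⟨fun j _ => ?_, fun j hkj _ => ?_⟩⟩
  · have hlt : (Cpoly r Cm (r * m + k) j).degree < (m + 1 : ℕ) :=
      degree_Cpoly_lt r Cm (by rw [mul_add_one]; omega)
    exact Order.le_of_lt_succ hlt
  · exact degree_Cpoly_lt r Cm (by omega)

theorem stmt1 (r : ℕ) (hr : 1 ≤ r) (v : ℕ → LF) (A B Cm : ℕ → ℕ → ℂ)
    (hGB : GaussBorel r v A B)
    (hCupper : ∀ k n, n < k → Cm k n = 0)
    (hCinv : ∀ ℓ n, ∑ k ∈ Finset.Icc ℓ n, B ℓ k * Cm k n = if ℓ = n then 1 else 0) :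
    -- `⟨q_k, x^n⟩ = A_{n,k}` where `q_k := Σ_{j<r} C_{k,j+1}(x)·v_{j+1}`
    (∀ n k, ∑ j ∈ Finset.range r, v j (Cpoly r Cm k j * Polynomial.X ^ n) = A n k) ∧
    -- in particular `⟨q_n, x^m⟩ = 0` for `m < n` and `⟨q_n, x^n⟩ = 1`
    (∀ n m, m < n → ∑ j ∈ Finset.range r, v j (Cpoly r Cm n j * Polynomial.X ^ m) = 0) ∧
    (∀ n, ∑ j ∈ Finset.range r, v j (Cpoly r Cm n j * Polynomial.X ^ n) = 1) ∧
    -- degree bounds: for `n = r m + k` with `k < r`, `deg C_{n,j+1} ≤ m` for `j ≤ k`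
    -- and `deg C_{n,j+1} ≤ m − 1` for `k < j < r`
    (∀ m k, k < r →
      (∀ j, j ≤ k → (Cpoly r Cm (r * m + k) j).degree ≤ (m : WithBot ℕ)) ∧
      (∀ j, k < j → j < r → (Cpoly r Cm (r * m + k) j).degree < (m : WithBot ℕ))) :=
  stmt1_general r hr v A B Cm hGB hCinv
end
end

section
/- Let r ≥ 1 and let (v_1,…,v_r) be a system of linear functionals on ℂ[x] such that for every 0 ≤ j ≤ r the moment matrix of V^{[j]} := (v_{j+1},…,v_r, x·v_1,…,x·v_j) admits a Gauss–Borel factorisation, and let (α_n) be as in the bidiagonal factorisation theorem, i.e. α_{(r+1)n} = B^{[r]}_{n,n}/B^{[0]}_{n,n} and α_{(r+1)n+i} = B^{[i−1]}_{n+1,n+1}/B^{[i]}_{n,n}. For 0 ≤ j ≤ r let q^{[j]}_n denote the type I linear forms on the step-line with respect to V^{[j]} with leading coefficients lc(q^{[j]}_n), and let P^{[j]}_n denote the monic type II multiple orthogonal polynomials on the step-line with respect to V^{[j]}, writing p^{[j]}_{n,n−1} for the coefficient of x^{n−1} in P^{[j]}_n (with p^{[r]}_{0,−1} := 0). Then for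 all n ∈ ℕ: α_{(r+1)n} = lc(q^{[0]}_n)/lc(q^{[r]}_n) = p^{[r]}_{n,n−1} − p^{[0]}_{n+1,n}, and for 1 ≤ i ≤ r: α_{(r+1)n+i} = lc(q^{[i]}_n)/lc(q^{[i−1]}_{n+1}) = p^{[i−1]}_{n+1,n} − p^{[i]}_{n+1,n}. -/
open Polynomial Finset

noncomputable section

/-- `x·u` is the functional `p ↦ ⟨u, x p⟩`. -/
def xMul (u : LF) : LF := u.comp (LinearMap.mulLeft ℂ (Polynomial.X : Polynomial ℂ))

/-- The Darboux-transformed system `V^{[j]} = (v_{j+1},…,v_r, x·v_1,…,x·v_j)`. -/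
def Vsys (r j : ℕ) (v : ℕ → LF) : ℕ → LF :=
  fun i => if j + i < r then v (j + i) else xMul (v (j + i - r))

/-- The coefficients `α_{(r+1)n} = B^{[r]}_{n,n}/B^{[0]}_{n,n}` and
`α_{(r+1)n+i} = B^{[i-1]}_{n+1,n+1}/B^{[i]}_{n,n}` for `1 ≤ i ≤ r`. -/
def alphaGB (r : ℕ) (B : ℕ → ℕ → ℕ → ℂ) (m : ℕ) : ℂ :=
  if m % (r + 1) = 0 then
    B r (m / (r + 1)) (m / (r + 1)) / B 0 (m / (r + 1)) (m / (r + 1))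
  else
    B (m % (r + 1) - 1) (m / (r + 1) + 1) (m / (r + 1) + 1)
      / B (m % (r + 1)) (m / (r + 1)) (m / (r + 1))

/-- `P` is the sequence of monic type II multiple orthogonal polynomials on
the step-line with respect to the system `v`
(`⟨v_j, x^k P_n⟩ = 0` whenever `n ≥ rk + j`, paper-`j` 1-indexed). -/
def TypeII (r : ℕ) (v : ℕ → LF) (P : ℕ → Polynomial ℂ) : Prop :=
  ∀ n, (P n).Monic ∧ (P n).natDegree = n ∧
    ∀ k j, j < r → r * k + j < n → v j (Polynomial.X ^ k * P n) = 0

/-- `Ap` gives the type I multiple orthogonal polynomials on the step-line: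
for `n = r m + k` (`k < r`), `q_n = Σ_{j<r} Ap n j · v_j` with the degree
bounds and the orthogonality/normalisation conditions. -/
def TypeI (r : ℕ) (v : ℕ → LF) (Ap : ℕ → ℕ → Polynomial ℂ) : Prop :=
  ∀ m k, k < r →
    (∀ j, j ≤ k → (Ap (r * m + k) j).degree ≤ (m : WithBot ℕ)) ∧
    (∀ j, k < j → j < r → (Ap (r * m + k) j).degree < (m : WithBot ℕ)) ∧
    (∀ ℓ, ℓ < r * m + k →
      ∑ j ∈ Finset.range r, v j (Ap (r * m + k) j * Polynomial.X ^ ℓ) = 0) ∧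
    (∑ j ∈ Finset.range r, v j (Ap (r * m + k) j * Polynomial.X ^ (r * m + k)) = 1)

/-- The leading coefficient of the type I linear form `q_n`: for
`n = r m + k` it is the coefficient of `x^m` in `Ap n k`. -/
def lcq (r : ℕ) (Ap : ℕ → ℕ → Polynomial ℂ) (n : ℕ) : ℂ :=
  (Ap n (n % r)).coeff (n / r)

/-!
Write `⟨Q, ℓ⟩` for the pairing of a polynomial `Q` with the `ℓ`-th functional
`x^⌊ℓ/r⌋ · v_{ℓ mod r}` of the step-line, so that column `ℓ` of the moment matrix lists the
`⟨x^m, ℓ⟩`. From `M = A·B` one gets: if `deg Q ≤ n` and `⟨Q, ℓ⟩ = 0` for `ℓ < n`, then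
`⟨Q, n⟩ = Q_n · B_{n,n}`. For `Q = P_n` this gives `B_{n,n} = ⟨P_n, n⟩`, and pairing the type I
form `q_n` with `P_n` gives `lc(q_n) · B_{n,n} = 1`.

Column `ℓ` of `V^{[j+1]}` is column `ℓ + 1` of `V^{[j]}`, and column `ℓ` of `V^{[r]}` paired
with `Q` is column `ℓ` of `V^{[0]}` paired with `x Q`. Hence `P^{[j]}_{n+1} - P^{[j+1]}_{n+1}`
(resp. `x P^{[r]}_n - P^{[0]}_{n+1}`) has degree `≤ n` and is orthogonal to the first `n` columns
of `V^{[j+1]}` (resp. `V^{[0]}`); pairing it with column `n` gives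
`B^{[j]}_{n+1,n+1} = (p^{[j]}_{n+1,n} - p^{[j+1]}_{n+1,n}) · B^{[j+1]}_{n,n}`
(resp. `B^{[r]}_{n,n} = (p^{[r]}_{n,n-1} - p^{[0]}_{n+1,n}) · B^{[0]}_{n,n}`).
-/

def stepLineForm (r : ℕ) (v : ℕ → LF) (ℓ : ℕ) : LF :=
  (v (ℓ % r)).comp (LinearMap.mulLeft ℂ (X ^ (ℓ / r)))

lemma stepLineForm_apply (r : ℕ) (v : ℕ → LF) (ℓ : ℕ) (Q : ℂ[X]) :
    stepLineForm r v ℓ Q = v (ℓ % r) (X ^ (ℓ / r) * Q) :=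
  rfl

lemma momentMatrix_eq_stepLineForm (r : ℕ) (v : ℕ → LF) (n ℓ : ℕ) :
    momentMatrix r v n ℓ = stepLineForm r v ℓ (X ^ n) := by
  rw [momentMatrix, stepLineForm_apply, pow_add]

lemma apply_eq_sum_coeff_mul_apply_X_pow {R : Type*} [CommSemiring R] (u : R[X] →ₗ[R] R)
    {Q : R[X]} {n : ℕ}
    (hQ : Q.natDegree ≤ n) :
    u Q = ∑ m ∈ range (n + 1), Q.coeff m * u (X ^ m) := by
  conv_lhs => rw [Q.as_sum_range' (n + 1) (Nat.lt_succ_of_le hQ)]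
  simp only [map_sum, ← smul_X_eq_monomial, map_smul, smul_eq_mul]

lemma stepLineForm_eq_sum_coeff_mul_momentMatrix (r : ℕ) (v : ℕ → LF) (ℓ : ℕ) {Q : ℂ[X]}
    {n : ℕ} (hQ : Q.natDegree ≤ n) :
    stepLineForm r v ℓ Q = ∑ m ∈ range (n + 1), Q.coeff m * momentMatrix r v m ℓ := by
  simp only [momentMatrix_eq_stepLineForm]
  exact apply_eq_sum_coeff_mul_apply_X_pow _ hQ

lemma stepLineForm_add_self {r : ℕ} (hr : 0 < r) (v : ℕ → LF) (ℓ : ℕ) (Q : ℂ[X]) :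
    stepLineForm r v (ℓ + r) Q = stepLineForm r v ℓ (X * Q) := by
  rw [stepLineForm_apply, stepLineForm_apply, Nat.add_mod_right, Nat.add_div_right _ hr,
    pow_succ, mul_assoc]

lemma stepLineForm_Vsys {r j : ℕ} (hr : 0 < r) (hj : j ≤ r) (v : ℕ → LF) (ℓ : ℕ) :
    stepLineForm r (Vsys r j v) ℓ = stepLineForm r v (ℓ + j) := by
  refine LinearMap.ext fun Q => ?_
  have hℓ := Nat.mod_add_div ℓ r
  have hi := Nat.mod_lt ℓ hr
  simp only [stepLineForm_apply, Vsys]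
  split_ifs with h
  · obtain ⟨hdiv, hmod⟩ := (Nat.div_mod_unique hr).2 (⟨by omega, h⟩ :
      j + ℓ % r + r * (ℓ / r) = ℓ + j ∧ j + ℓ % r < r)
    rw [hdiv, hmod]
  · obtain ⟨hdiv, hmod⟩ := (Nat.div_mod_unique hr).2 (⟨by rw [Nat.mul_succ]; omega, by omega⟩ :
      j + ℓ % r - r + r * (ℓ / r + 1) = ℓ + j ∧ j + ℓ % r - r < r)
    rw [hdiv, hmod, xMul, LinearMap.comp_apply, LinearMap.mulLeft_apply, ← mul_assoc, ← pow_succ']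

lemma stepLineForm_Vsys_succ {r j : ℕ} (hr : 0 < r) (hj : j < r) (v : ℕ → LF) (ℓ : ℕ) :
    stepLineForm r (Vsys r (j + 1) v) ℓ = stepLineForm r (Vsys r j v) (ℓ + 1) := by
  rw [stepLineForm_Vsys hr hj, stepLineForm_Vsys hr hj.le, add_assoc, add_comm 1 j]

lemma stepLineForm_Vsys_self {r : ℕ} (hr : 0 < r) (v : ℕ → LF) (ℓ : ℕ) (Q : ℂ[X]) :
    stepLineForm r (Vsys r r v) ℓ Q = stepLineForm r (Vsys r 0 v) ℓ (X * Q) := by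
  rw [stepLineForm_Vsys hr le_rfl, stepLineForm_Vsys hr (Nat.zero_le r), add_zero,
    stepLineForm_add_self hr]

lemma eq_zero_of_sum_mul_upperTriangular_eq_zero {R : Type*} [Semiring R] [NoZeroDivisors R]
    {B : ℕ → ℕ → R} (hB : ∀ n ℓ, ℓ < n → B n ℓ = 0) (hBd : ∀ n, B n n ≠ 0) {y : ℕ → R} {n : ℕ}
    (hy : ∀ ℓ < n, ∑ s ∈ range (n + 1), y s * B s ℓ = 0) :
    ∀ s < n, y s = 0 := by
  intro s hs
  induction s using Nat.strong_induction_on with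
  | _ s ih =>
  have hsum := hy s hs
  rw [Finset.sum_eq_single_of_mem s (mem_range.2 (by omega))] at hsum
  · exact (mul_eq_zero.1 hsum).resolve_right (hBd s)
  · intro t _ hts
    rcases lt_or_gt_of_ne hts with hlt | hgt
    · rw [ih t hlt (by omega), zero_mul]
    · rw [hB t s hgt, mul_zero]

namespace TypeII

variable {r : ℕ} {v : ℕ → LF} {P : ℕ → ℂ[X]}

lemma isMonicOfDegree (hP : TypeII r v P) (n : ℕ) : IsMonicOfDegree (P n) n :=
  ⟨(hP n).2.1, (hP n).1⟩

lemma coeff_self (hP : TypeII r v P) (n : ℕ) : (P n).coeff n = 1 := by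
  simpa only [(hP n).2.1] using (hP n).1.coeff_natDegree

lemma stepLineForm_eq_zero (hP : TypeII r v P) (hr : 0 < r) {ℓ n : ℕ} (hℓ : ℓ < n) :
    stepLineForm r v ℓ (P n) = 0 :=
  (hP n).2.2 (ℓ / r) (ℓ % r) (Nat.mod_lt ℓ hr) (by have := Nat.div_add_mod ℓ r; omega)

end TypeII

lemma TypeI.lcq_mul_stepLineForm {r : ℕ} {v : ℕ → LF} {Ap : ℕ → ℕ → ℂ[X]} {P : ℕ → ℂ[X]}
    (hAp : TypeI r v Ap) (hP : TypeII r v P) (hr : 0 < r) (n : ℕ) :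
    lcq r Ap n * stepLineForm r v n (P n) = 1 := by
  obtain ⟨M, K, hK, rfl⟩ : ∃ M K, K < r ∧ r * M + K = n :=
    ⟨n / r, n % r, Nat.mod_lt n hr, Nat.div_add_mod n r⟩
  obtain ⟨hdeg, hdeg', horth, hnorm⟩ := hAp M K hK
  obtain ⟨hdiv, hmod⟩ := (Nat.div_mod_unique hr).2 (⟨add_comm _ _, hK⟩ :
    K + r * M = r * M + K ∧ K < r)
  set n := r * M + K
  let q : LF := ∑ j ∈ range r, (v j).comp (LinearMap.mulLeft ℂ (Ap n j))
  have hq : ∀ Q, q Q = ∑ j ∈ range r, v j (Ap n j * Q) := fun Q => by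
    simp only [q, LinearMap.sum_apply, LinearMap.comp_apply, LinearMap.mulLeft_apply]
  have hq_P : q (P n) = 1 := by
    rw [apply_eq_sum_coeff_mul_apply_X_pow q (hP.isMonicOfDegree n).natDegree_eq.le,
      Finset.sum_range_succ, hP.coeff_self, hq, hnorm, one_mul,
      Finset.sum_eq_zero fun m hm => by rw [hq, horth m (mem_range.1 hm), mul_zero], zero_add]
  have hnatDeg : ∀ j < r, (Ap n j).natDegree ≤ M := fun j hj => by
    rcases le_or_gt j K with hjK | hjK
    · exact natDegree_le_iff_degree_le.2 (hdeg j hjK)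
    · exact natDegree_le_iff_degree_le.2 (hdeg' j hjK hj).le
  -- Only `(j, m) = (K, M)` survives: lower indices are killed by type II orthogonality,
  -- higher ones by the type I degree bounds.
  have hterm : ∀ j < r, ∀ m ≤ M, (j, m) ≠ (K, M) →
      (Ap n j).coeff m * v j (X ^ m * P n) = 0 := by
    intro j hj m hm hne
    by_cases hlt : r * m + j < n
    · rw [(hP n).2.2 m j hj hlt, mul_zero]
    obtain rfl : m = M := by
      by_contra hmM
      have := Nat.mul_le_mul_left r (show m + 1 ≤ M by omega)
      rw [Nat.mul_succ] at this
      omega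
    have hKj : K < j := by
      have : j ≠ K := fun hjK => hne (by rw [hjK])
      omega
    rw [coeff_eq_zero_of_degree_lt (hdeg' j hKj hj), zero_mul]
  have hexp : ∀ j ∈ range r, v j (Ap n j * P n)
      = ∑ m ∈ range (M + 1), (Ap n j).coeff m * v j (X ^ m * P n) := fun j hj =>
    apply_eq_sum_coeff_mul_apply_X_pow ((v j).comp (LinearMap.mulRight ℂ (P n)))
      (hnatDeg j (mem_range.1 hj))
  rw [← hq_P, hq, Finset.sum_congr rfl hexp, ← Finset.sum_product',
    Finset.sum_eq_single_of_mem (K, M) (mem_product.2 ⟨mem_range.2 hK, self_mem_range_succ M⟩)]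
  · rw [lcq, stepLineForm_apply, hdiv, hmod]
  · rintro ⟨j, m⟩ hjm hne
    rw [mem_product, mem_range, mem_range] at hjm
    exact hterm j hjm.1 m (Nat.lt_succ_iff.1 hjm.2) hne

namespace GaussBorel

variable {r : ℕ} {v : ℕ → LF} {A B : ℕ → ℕ → ℂ} {P : ℕ → ℂ[X]}

lemma momentMatrix_eq_sum_range (h : GaussBorel r v A B) {m n : ℕ} (hm : m ≤ n) (ℓ : ℕ) :
    momentMatrix r v m ℓ = ∑ s ∈ range (n + 1), A m s * B s ℓ := by
  rw [h.factor]
  refine Finset.sum_subset (range_subset_range.2 (by omega)) fun s _ hs => ?_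
  rw [h.A_upper m s (by simpa using hs), zero_mul]

lemma stepLineForm_eq_sum (h : GaussBorel r v A B) (ℓ : ℕ) {Q : ℂ[X]} {n : ℕ}
    (hQ : Q.natDegree ≤ n) :
    stepLineForm r v ℓ Q
      = ∑ s ∈ range (n + 1), (∑ m ∈ range (n + 1), Q.coeff m * A m s) * B s ℓ := by
  rw [stepLineForm_eq_sum_coeff_mul_momentMatrix r v ℓ hQ]
  simp only [Finset.sum_mul, mul_assoc]
  rw [Finset.sum_comm]
  refine Finset.sum_congr rfl fun m hm => ?_
  rw [h.momentMatrix_eq_sum_range (Nat.lt_succ_iff.1 (mem_range.1 hm)), Finset.mul_sum]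

lemma stepLineForm_eq_coeff_mul_diag (h : GaussBorel r v A B) {Q : ℂ[X]} {n : ℕ}
    (hQ : Q.natDegree ≤ n) (horth : ∀ ℓ < n, stepLineForm r v ℓ Q = 0) :
    stepLineForm r v n Q = Q.coeff n * B n n := by
  set y : ℕ → ℂ := fun s => ∑ m ∈ range (n + 1), Q.coeff m * A m s
  have hy : ∀ s < n, y s = 0 := eq_zero_of_sum_mul_upperTriangular_eq_zero h.B_lower h.B_diag
    fun ℓ hℓ => (h.stepLineForm_eq_sum ℓ hQ).symm.trans (horth ℓ hℓ)
  have hyn : y n = Q.coeff n := by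
    show ∑ m ∈ range (n + 1), Q.coeff m * A m n = Q.coeff n
    rw [Finset.sum_eq_single_of_mem n (self_mem_range_succ n), h.A_diag, mul_one]
    intro m hm hmn
    rw [h.A_upper m n (by have := mem_range.1 hm; omega), mul_zero]
  rw [h.stepLineForm_eq_sum n hQ, Finset.sum_range_succ, ← hyn,
    Finset.sum_eq_zero fun s hs => mul_eq_zero_of_left (hy s (mem_range.1 hs)) _, zero_add]

lemma diag_eq_stepLineForm (h : GaussBorel r v A B) (hP : TypeII r v P) (hr : 0 < r) (n : ℕ) :
    B n n = stepLineForm r v n (P n) := by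
  rw [h.stepLineForm_eq_coeff_mul_diag (hP.isMonicOfDegree n).natDegree_eq.le
    fun ℓ hℓ => hP.stepLineForm_eq_zero hr hℓ, hP.coeff_self, one_mul]

lemma lcq_eq_inv_diag (h : GaussBorel r v A B) (hP : TypeII r v P) {Ap : ℕ → ℕ → ℂ[X]}
    (hAp : TypeI r v Ap) (hr : 0 < r) (n : ℕ) :
    lcq r Ap n = (B n n)⁻¹ := by
  rw [h.diag_eq_stepLineForm hP hr]
  exact eq_inv_of_mul_eq_one_left (hAp.lcq_mul_stepLineForm hP hr n)

lemma stepLineForm_eq_coeff_sub_mul_diag (h : GaussBorel r v A B) (hP : TypeII r v P)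
    (hr : 0 < r) {Q : ℂ[X]} {n : ℕ} (hQ : IsMonicOfDegree Q (n + 1))
    (horth : ∀ ℓ < n, stepLineForm r v ℓ Q = 0) :
    stepLineForm r v n Q = (Q.coeff n - (P (n + 1)).coeff n) * B n n := by
  have hdeg : (Q - P (n + 1)).natDegree ≤ n :=
    Nat.le_of_lt_succ (hQ.natDegree_sub_lt n.succ_ne_zero (hP.isMonicOfDegree _))
  have key := h.stepLineForm_eq_coeff_mul_diag hdeg fun ℓ hℓ => by
    rw [map_sub, horth ℓ hℓ, hP.stepLineForm_eq_zero hr (by omega : ℓ < n + 1), sub_zero]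
  rwa [map_sub, hP.stepLineForm_eq_zero hr n.lt_succ_self, sub_zero, coeff_sub] at key

end GaussBorel

section Darboux

variable {r : ℕ} {v : ℕ → LF} {A B A' B' : ℕ → ℕ → ℂ} {P P' : ℕ → ℂ[X]}

lemma diag_Vsys_self_eq (hr : 0 < r) (h : GaussBorel r (Vsys r 0 v) A B)
    (h' : GaussBorel r (Vsys r r v) A' B') (hP : TypeII r (Vsys r 0 v) P)
    (hP' : TypeII r (Vsys r r v) P') (n : ℕ) :
    B' n n = ((X * P' n).coeff n - (P (n + 1)).coeff n) * B n n := by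
  have hXP : IsMonicOfDegree (X * P' n) (n + 1) := by
    simpa only [add_comm 1 n] using (isMonicOfDegree_X (R := ℂ)).mul (hP'.isMonicOfDegree n)
  rw [h'.diag_eq_stepLineForm hP' hr, stepLineForm_Vsys_self hr]
  exact h.stepLineForm_eq_coeff_sub_mul_diag hP hr hXP fun ℓ hℓ => by
    rw [← stepLineForm_Vsys_self hr, hP'.stepLineForm_eq_zero hr hℓ]

lemma diag_Vsys_succ_eq {j : ℕ} (hr : 0 < r) (hj : j < r) (h : GaussBorel r (Vsys r j v) A B)
    (h' : GaussBorel r (Vsys r (j + 1) v) A' B') (hP : TypeII r (Vsys r j v) P)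
    (hP' : TypeII r (Vsys r (j + 1) v) P') (n : ℕ) :
    B (n + 1) (n + 1) = ((P (n + 1)).coeff n - (P' (n + 1)).coeff n) * B' n n := by
  rw [h.diag_eq_stepLineForm hP hr, ← stepLineForm_Vsys_succ hr hj]
  exact h'.stepLineForm_eq_coeff_sub_mul_diag hP' hr (hP.isMonicOfDegree _) fun ℓ hℓ => by
    rw [stepLineForm_Vsys_succ hr hj, hP.stepLineForm_eq_zero hr (by omega)]

end Darboux

lemma coeff_X_mul_eq_ite {R : Type*} [Semiring R] (p : R[X]) (n : ℕ) :
    (X * p).coeff n = if n = 0 then 0 else p.coeff (n - 1) := by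
  cases n with
  | zero => exact coeff_X_mul_zero p
  | succ n => exact coeff_X_mul p n

lemma alphaGB_mul (r : ℕ) (B : ℕ → ℕ → ℕ → ℂ) (n : ℕ) :
    alphaGB r B ((r + 1) * n) = B r n n / B 0 n n := by
  rw [alphaGB, if_pos (Nat.mul_mod_right _ _), Nat.mul_div_cancel_left _ r.succ_pos]

lemma alphaGB_mul_add_succ {r j : ℕ} (hj : j < r) (B : ℕ → ℕ → ℕ → ℂ) (n : ℕ) :
    alphaGB r B ((r + 1) * n + (j + 1)) = B j (n + 1) (n + 1) / B (j + 1) n n := by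
  obtain ⟨hdiv, hmod⟩ := (Nat.div_mod_unique r.succ_pos).2
    (⟨add_comm _ _, by omega⟩ : j + 1 + (r + 1) * n = (r + 1) * n + (j + 1) ∧ j + 1 < r + 1)
  rw [alphaGB, hdiv, hmod, if_neg j.succ_ne_zero, Nat.add_sub_cancel]

theorem stmt5 (r : ℕ) (hr : 1 ≤ r) (v : ℕ → LF) (A B : ℕ → ℕ → ℕ → ℂ)
    (hGB : ∀ j, j ≤ r → GaussBorel r (Vsys r j v) (A j) (B j))
    (P : ℕ → ℕ → Polynomial ℂ) (hP : ∀ j, j ≤ r → TypeII r (Vsys r j v) (P j))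
    (Ap : ℕ → ℕ → ℕ → Polynomial ℂ) (hAp : ∀ j, j ≤ r → TypeI r (Vsys r j v) (Ap j)) :
    ∀ n : ℕ,
      (alphaGB r B ((r + 1) * n) = lcq r (Ap 0) n / lcq r (Ap r) n ∧
       alphaGB r B ((r + 1) * n)
          = (if n = 0 then 0 else (P r n).coeff (n - 1)) - (P 0 (n + 1)).coeff n) ∧
      (∀ i, 1 ≤ i → i ≤ r →
        alphaGB r B ((r + 1) * n + i) = lcq r (Ap i) n / lcq r (Ap (i - 1)) (n + 1) ∧
        alphaGB r B ((r + 1) * n + i)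
          = (P (i - 1) (n + 1)).coeff n - (P i (n + 1)).coeff n) := by
  intro n
  have hlcq : ∀ j ≤ r, ∀ m, lcq r (Ap j) m = (B j m m)⁻¹ := fun j hj =>
    (hGB j hj).lcq_eq_inv_diag (hP j hj) (hAp j hj) hr
  refine ⟨?_, fun i hi hir => ?_⟩
  · rw [alphaGB_mul, hlcq 0 r.zero_le, hlcq r le_rfl, inv_div_inv, ← coeff_X_mul_eq_ite]
    exact ⟨rfl, div_eq_of_eq_mul ((hGB 0 r.zero_le).B_diag n) (diag_Vsys_self_eq hr
      (hGB 0 r.zero_le) (hGB r le_rfl) (hP 0 r.zero_le) (hP r le_rfl) n)⟩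
  · obtain ⟨j, rfl⟩ : ∃ j, i = j + 1 := ⟨i - 1, by omega⟩
    rw [alphaGB_mul_add_succ hir, Nat.add_sub_cancel, hlcq j (by omega), hlcq (j + 1) hir,
      inv_div_inv]
    exact ⟨rfl, div_eq_of_eq_mul ((hGB (j + 1) hir).B_diag n) (diag_Vsys_succ_eq hr hir
      (hGB j (by omega)) (hGB (j + 1) hir) (hP j (by omega)) (hP (j + 1) hir) n)⟩

end
end

section
/- Fix r ≥ 1 and let (v_1,…,v_r) be a system of linear functionals on ℂ[x] with ⟨v_j, 1⟩ = 1 for all 1 ≤ j ≤ r. Then the following are equivalent: (i) there exist a sequence of formal power series (g_k)_{k∈ℕ} in ℂ[[t]] each with constant coefficient 1 and a sequence (α_k)_{k∈ℕ} of nonzero complex numbers such that g_0 = 1, g_j = Σ_{n≥0} ⟨v_j, x^n⟩ t^n for 1 ≤ j ≤ r, and g_{k+1} − g_k = α_k t g_{k+r+1} for all k ∈ ℕ; (ii) for every 0 ≤ j ≤ r and every m ≥ 1, the determinant of the m×m leading principal submatrix of the moment matrix of the system V^{[j]} := (v_{j+1},…,v_r, x·v_1,…,x·v_j) is nonzero (equivalently,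 all type I and type II multiple orthogonal polynomials on the step-line with respect to each V^{[j]} exist and are unique). -/
open Polynomial Finset

noncomputable section

/-- `Δ_m`: determinant of the `m × m` leading principal submatrix of the
moment matrix of `v`. -/
def Delta (r : ℕ) (v : ℕ → LF) (m : ℕ) : ℂ :=
  Matrix.det (Matrix.of fun i j : Fin m => momentMatrix r v i j)

/-!
Encode the system as the single sequence `c (i + r n) = ⟨v_{i+1}, xⁿ⟩` (`i < r`) and put
`F_a = ∑ₙ c (a + r n) tⁿ`; then `g_j = F_{j-1}` for `1 ≤ j ≤ r`, and the moment matrix of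
`V^{[j]}` is `(c (j + ℓ + r n))_{n,ℓ}`, whose columns are the coefficient vectors of `F_{j+ℓ}`.

If `c r ≠ 0`, the Darboux transform `c'` is defined by `F_{i+1} = λᵢ F₀ F'ᵢ` for `i < r`, with
`λ_{r-1} = c r` and `λᵢ = 1` otherwise. A solution of (i) for `c` yields one for `c'` by
`g'_k = g_{k+1} / F₀`, `α'_k = α_{k+1}`, and `c r = α₀`; conversely, if every iterated transform
`c⁽ᵏ⁾` has `c⁽ᵏ⁾ r ≠ 0`, then `g_k = F₀(c) F₀(c') ⋯ F₀(c⁽ᵏ⁻¹⁾)` solves (i) with `α_k = c⁽ᵏ⁾ r`.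
On the determinant side, shifting `F_{a+1} = λ F₀ F'_a` by whole periods shows that
`F_{a+1} / F₀` is `λ F'_a` plus a combination of earlier columns `F'_b`, `r - 1 ≤ b < a`. Since
multiplying by `F₀` acts on coefficient vectors by a unitriangular matrix, this gives
`Δ_m(V^{[j+1]}) = (∏ λ) Δ_m(V'^{[j]})` and `Δ_{m+1}(V^{[0]}) = (∏ λ) Δ_m(V'^{[r]})`.
So (i) and (ii) are both equivalent to `c⁽ᵏ⁾ r ≠ 0` for all `k`.
-/

open PowerSeries

namespace Matrix

theorem det_eq_prod_mul_det_of_sub_smul_mem_span {R ι : Type*} [CommRing R] [Fintype ι]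
    [LinearOrder ι] (A B : Matrix ι ι R) (d : ι → R)
    (h : ∀ j, (fun i => A i j) - d j • (fun i => B i j) ∈
      Submodule.span R ((fun k i => B i k) '' Set.Iio j)) :
    A.det = (∏ j, d j) * B.det := by
  classical
  choose l hl hlA using fun j => (Finsupp.mem_span_image_iff_linearCombination R).1 (h j)
  have hl0 : ∀ i j, ¬ i < j → l j i = 0 := fun i j hij =>
    Finsupp.notMem_support_iff.1 fun hi => hij (hl j hi)
  set U : Matrix ι ι R := diagonal d + of fun i j => l j i
  have hAU : A = B * U := by
    ext n j
    have := congrFun (hlA j) n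
    rw [Finsupp.linearCombination_apply, Finsupp.sum_fintype _ _ (by simp)] at this
    simp only [Finset.sum_apply, Pi.smul_apply, Pi.sub_apply, smul_eq_mul] at this
    rw [eq_sub_iff_add_eq] at this
    rw [Matrix.mul_add, add_apply, mul_diagonal, mul_apply, ← this]
    simp only [of_apply, mul_comm]
    ring
  have hU : U.IsUpperTriangular := fun i j hij => by
    simp [U, diagonal_apply_ne _ (ne_of_gt (show j < i from hij)), hl0 i j (not_lt_of_gt hij)]
  rw [hAU, det_mul, det_of_isUpperTriangular hU, mul_comm]
  congr 1
  exact Finset.prod_congr rfl fun j _ => by simp [U, hl0 j j (lt_irrefl j)]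

end Matrix

namespace PowerSeries

variable {R : Type*} [CommRing R] {m : ℕ}

def tail : R⟦X⟧ →ₗ[R] R⟦X⟧ where
  toFun φ := mk fun n => coeff (n + 1) φ
  map_add' φ ψ := by ext; simp
  map_smul' a φ := by ext; simp

@[simp] theorem coeff_tail (φ : R⟦X⟧) (n : ℕ) : coeff n (tail φ) = coeff (n + 1) φ := by
  simp [tail]

theorem tail_mul (φ ψ : R⟦X⟧) : tail (φ * ψ) = φ * tail ψ + constantCoeff ψ • tail φ := by
  ext n
  rw [coeff_tail, coeff_mul, Finset.Nat.sum_antidiagonal_succ', map_add, coeff_mul,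
    coeff_smul, coeff_tail, add_comm, ← coeff_zero_eq_constantCoeff_apply, smul_eq_mul, mul_comm]
  simp

def coeffMatrix (m : ℕ) (S : ℕ → R⟦X⟧) : Matrix (Fin m) (Fin m) R :=
  Matrix.of fun n ℓ => coeff n (S ℓ)

theorem coeff_mul_eq_sum_fin (φ ψ : R⟦X⟧) (n : Fin m) :
    coeff n (φ * ψ) =
      ∑ p : Fin m, (if (p : ℕ) ≤ n then coeff (n - p : ℕ) φ else 0) * coeff p ψ := by
  rw [Fin.sum_univ_eq_sum_range (fun p => (if p ≤ n then coeff (n - p) φ else 0) * coeff p ψ),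
    ← Finset.sum_subset (Finset.range_subset_range.2 n.2), mul_comm, coeff_mul,
    Finset.Nat.sum_antidiagonal_eq_sum_range_succ_mk]
  · refine Finset.sum_congr rfl fun p hp => ?_
    rw [if_pos (Nat.lt_succ_iff.1 (Finset.mem_range.1 hp)), mul_comm]
  · intro p _ hp
    rw [if_neg (by simpa [Nat.lt_succ_iff] using hp), zero_mul]

theorem det_coeffMatrix_mul_left {φ : R⟦X⟧} (hφ : constantCoeff φ = 1) (S : ℕ → R⟦X⟧) :
    (coeffMatrix m fun ℓ => φ * S ℓ).det = (coeffMatrix m S).det := by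
  let L : Matrix (Fin m) (Fin m) R :=
    Matrix.of fun n p => if (p : ℕ) ≤ n then coeff (n - p : ℕ) φ else 0
  have hL : L.IsLowerTriangular := fun n p hpn => if_neg (not_le.2 hpn)
  have hLS : coeffMatrix m (fun ℓ => φ * S ℓ) = L * coeffMatrix m S := by
    ext n ℓ
    simp only [coeffMatrix, Matrix.of_apply, Matrix.mul_apply, L, coeff_mul_eq_sum_fin]
  rw [hLS, Matrix.det_mul, Matrix.det_of_isLowerTriangular L hL]
  simp [L, hφ]

theorem det_coeffMatrix_of_sub_smul_mem_span (S T : ℕ → R⟦X⟧) (d : ℕ → R)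
    (h : ∀ ℓ < m, S ℓ - d ℓ • T ℓ ∈ Submodule.span R (T '' Set.Iio ℓ)) :
    (coeffMatrix m S).det = (∏ ℓ : Fin m, d ℓ) * (coeffMatrix m T).det := by
  let π : R⟦X⟧ →ₗ[R] Fin m → R := LinearMap.pi fun n => coeff n
  refine Matrix.det_eq_prod_mul_det_of_sub_smul_mem_span _ _ _ fun ℓ => ?_
  have hℓ := Submodule.apply_mem_span_image_of_mem_span π (h ℓ ℓ.2)
  rw [map_sub, map_smul, Set.image_image] at hℓ
  refine Submodule.span_mono ?_ hℓ
  rintro _ ⟨b, hb, rfl⟩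
  exact ⟨⟨b, hb.trans ℓ.2⟩, hb, rfl⟩

theorem det_coeffMatrix_succ {S : ℕ → R⟦X⟧} (h : S 0 = 1) :
    (coeffMatrix (m + 1) S).det = (coeffMatrix m fun ℓ => tail (S (ℓ + 1))).det := by
  have hsub : (coeffMatrix (m + 1) S).submatrix Fin.succ Fin.succ =
      coeffMatrix m fun ℓ => tail (S (ℓ + 1)) := by
    ext
    simp [coeffMatrix]
  rw [Matrix.det_succ_column_zero,
    Finset.sum_eq_single 0 (fun i _ hi => by simp [coeffMatrix, h, hi]) (by simp),
    Fin.succAbove_zero, hsub]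
  simp [coeffMatrix, h]

end PowerSeries

namespace BranchedContinuedFraction

section Stride

variable {R : Type*} [CommRing R]

def strideSeries (r : ℕ) (c : ℕ → R) (a : ℕ) : R⟦X⟧ := mk fun n => c (a + r * n)

@[simp] theorem coeff_strideSeries (r : ℕ) (c : ℕ → R) (a n : ℕ) :
    coeff n (strideSeries r c a) = c (a + r * n) := coeff_mk _ _

@[simp] theorem constantCoeff_strideSeries (r : ℕ) (c : ℕ → R) (a : ℕ) :
    constantCoeff (strideSeries r c a) = c a := by
  simp [← coeff_zero_eq_constantCoeff_apply]

theorem tail_strideSeries (r : ℕ) (c : ℕ → R) (a : ℕ) :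
    tail (strideSeries r c a) = strideSeries r c (a + r) := by
  ext n
  simp only [coeff_tail, coeff_strideSeries]
  ring_nf

theorem strideSeries_zero_sub_one {r : ℕ} {c : ℕ → R} (hc0 : c 0 = 1) :
    strideSeries r c 0 - 1 = PowerSeries.X * strideSeries r c r := by
  conv_lhs => rw [eq_X_mul_shift_add_const (strideSeries r c 0)]
  rw [constantCoeff_strideSeries, hc0, map_one, add_sub_cancel_right]
  congr 1
  ext n
  simp [mul_add, add_comm]

def hankelMinor (r : ℕ) (c : ℕ → R) (j m : ℕ) : R :=
  (coeffMatrix m fun ℓ => strideSeries r c (j + ℓ)).det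

theorem hankelMinor_one (r : ℕ) (c : ℕ → R) (j : ℕ) : hankelMinor r c j 1 = c j := by
  simp [hankelMinor, coeffMatrix]

end Stride

variable {K : Type*} [Field K] {r : ℕ} {c : ℕ → K}

def darbouxFactor (r : ℕ) (c : ℕ → K) (i : ℕ) : K := if i = r - 1 then c r else 1

/-- The coefficients of `F'ᵢ = λᵢ⁻¹ • F₀⁻¹ * F_{i+1}` (`i < r`), interlaced like those of `c`,
where `F = strideSeries r c` and `λ = darbouxFactor r c`. -/
def darboux (r : ℕ) (c : ℕ → K) (a : ℕ) : K :=
  (darbouxFactor r c (a % r))⁻¹ *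
    coeff (a / r) ((strideSeries r c 0)⁻¹ * strideSeries r c (a % r + 1))

def IsNormalized (r : ℕ) (c : ℕ → K) : Prop := ∀ i < r, c i = 1

theorem darbouxFactor_ne_zero (hcr : c r ≠ 0) (i : ℕ) : darbouxFactor r c i ≠ 0 := by
  unfold darbouxFactor; split_ifs <;> simp [hcr]

theorem strideSeries_darboux {i : ℕ} (hi : i < r) :
    strideSeries r (darboux r c) i =
      (darbouxFactor r c i)⁻¹ • ((strideSeries r c 0)⁻¹ * strideSeries r c (i + 1)) := by
  have hr : 0 < r := by omega
  ext n
  rw [coeff_strideSeries, PowerSeries.coeff_smul, darboux, Nat.add_mul_mod_self_left,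
    Nat.mod_eq_of_lt hi, Nat.add_mul_div_left _ _ hr, Nat.div_eq_of_lt hi, zero_add, smul_eq_mul]

theorem inv_mul_strideSeries_succ (hcr : c r ≠ 0) {i : ℕ} (hi : i < r) :
    (strideSeries r c 0)⁻¹ * strideSeries r c (i + 1) =
      darbouxFactor r c i • strideSeries r (darboux r c) i := by
  rw [strideSeries_darboux hi, smul_inv_smul₀ (darbouxFactor_ne_zero hcr i)]

theorem strideSeries_succ (hc0 : c 0 = 1) (hcr : c r ≠ 0) {i : ℕ} (hi : i < r) :
    strideSeries r c (i + 1) =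
      strideSeries r c 0 * (darbouxFactor r c i • strideSeries r (darboux r c) i) := by
  rw [← inv_mul_strideSeries_succ hcr hi, ← mul_assoc,
    PowerSeries.mul_inv_cancel _ (by simp [hc0]), one_mul]

theorem IsNormalized.darboux (hc : IsNormalized r c) (hcr : c r ≠ 0) :
    IsNormalized r (darboux r c) := by
  intro i hi
  have h := congrArg PowerSeries.constantCoeff (inv_mul_strideSeries_succ hcr hi)
  rw [map_mul, constantCoeff_inv, constantCoeff_strideSeries, constantCoeff_strideSeries,
    hc 0 (by omega), inv_one, one_mul, PowerSeries.constantCoeff_smul, constantCoeff_strideSeries,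
    smul_eq_mul] at h
  unfold darbouxFactor at h
  split_ifs at h with hir
  · rw [show i + 1 = r by omega] at h
    exact (mul_eq_left₀ hcr).1 h.symm
  · rw [hc (i + 1) (by omega), one_mul] at h
    exact h.symm

theorem inv_mul_strideSeries_succ_sub_mem_span (hr : 0 < r) (hc0 : c 0 = 1) (hcr : c r ≠ 0)
    (a : ℕ) :
    (strideSeries r c 0)⁻¹ * strideSeries r c (a + 1) -
        darbouxFactor r c (a % r) • strideSeries r (darboux r c) a ∈
      Submodule.span K (strideSeries r (darboux r c) '' Set.Ico (r - 1) a) := by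
  induction a using Nat.strong_induction_on with
  | _ a ih =>
  rcases lt_or_ge a r with ha | ha
  · rw [Nat.mod_eq_of_lt ha, inv_mul_strideSeries_succ hcr ha, sub_self]
    exact zero_mem _
  obtain ⟨a, rfl⟩ := Nat.exists_eq_add_of_le' ha
  set ψ := (strideSeries r c 0)⁻¹ * strideSeries r c (a + 1)
  have hF0 : strideSeries r c 0 * (strideSeries r c 0)⁻¹ = 1 :=
    PowerSeries.mul_inv_cancel _ (by simp [hc0])
  -- `F_{a+r+1} = tail (F₀ ψ)`; `tail_mul` splits off `ψ(0) • F_r`, a multiple of `F₀ F'_{r-1}`.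
  have hshift : (strideSeries r c 0)⁻¹ * strideSeries r c (a + r + 1) =
      tail ψ + (PowerSeries.constantCoeff ψ * darbouxFactor r c (r - 1)) •
        strideSeries r (darboux r c) (r - 1) := by
    have hFr := inv_mul_strideSeries_succ hcr (Nat.sub_lt hr one_pos)
    rw [Nat.sub_one_add_one hr.ne'] at hFr
    have hψ : strideSeries r c 0 * ψ = strideSeries r c (a + 1) := by
      rw [← mul_assoc, hF0, one_mul]
    rw [add_right_comm, ← tail_strideSeries, ← hψ, tail_mul, tail_strideSeries, zero_add, mul_add,
      ← mul_assoc, PowerSeries.inv_mul_cancel _ (by simp [hc0]), one_mul, mul_smul_comm, hFr,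
      smul_smul]
  have htail : tail ψ - darbouxFactor r c ((a + r) % r) • strideSeries r (darboux r c) (a + r) ∈
      Submodule.span K (strideSeries r (darboux r c) '' Set.Ico (r - 1) (a + r)) := by
    rw [Nat.add_mod_right, ← tail_strideSeries, ← map_smul, ← map_sub]
    refine Submodule.span_mono ?_
      (Submodule.apply_mem_span_image_of_mem_span tail (ih a (by omega)))
    rintro _ ⟨_, ⟨b, hb, rfl⟩, rfl⟩
    exact ⟨b + r, ⟨by grind, by grind⟩, (tail_strideSeries _ _ _).symm⟩
  rw [hshift, add_sub_right_comm]
  exact add_mem htail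
    (Submodule.smul_mem _ _ (Submodule.subset_span ⟨r - 1, ⟨le_rfl, by omega⟩, rfl⟩))

theorem hankelMinor_succ_left (hr : 0 < r) (hc0 : c 0 = 1) (hcr : c r ≠ 0) {j : ℕ} (hj : j < r)
    (m : ℕ) :
    hankelMinor r c (j + 1) m =
      (∏ ℓ : Fin m, darbouxFactor r c ((j + ℓ) % r)) * hankelMinor r (darboux r c) j m := by
  have hF0 : PowerSeries.constantCoeff (strideSeries r c 0) = 1 := by simp [hc0]
  have hcols : (fun ℓ => strideSeries r c (j + 1 + ℓ)) = fun ℓ =>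
      strideSeries r c 0 * ((strideSeries r c 0)⁻¹ * strideSeries r c (j + ℓ + 1)) := by
    funext ℓ
    rw [← mul_assoc, PowerSeries.mul_inv_cancel _ (by simp [hc0]), one_mul, add_right_comm]
  rw [hankelMinor, hcols, det_coeffMatrix_mul_left hF0, hankelMinor]
  refine det_coeffMatrix_of_sub_smul_mem_span _ _ _ fun ℓ _ => Submodule.span_mono ?_
    (inv_mul_strideSeries_succ_sub_mem_span hr hc0 hcr (j + ℓ))
  rintro _ ⟨b, hb, rfl⟩
  exact ⟨b - j, by grind, by grind⟩

theorem hankelMinor_zero_succ (hr : 0 < r) (hc0 : c 0 = 1) (hcr : c r ≠ 0) (m : ℕ) :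
    hankelMinor r c 0 (m + 1) =
      (∏ ℓ : Fin m, darbouxFactor r c (ℓ % r)) * hankelMinor r (darboux r c) r m := by
  have hF0 : PowerSeries.constantCoeff (strideSeries r c 0) = 1 := by simp [hc0]
  have hcols : (fun ℓ => strideSeries r c (0 + ℓ)) = fun ℓ =>
      strideSeries r c 0 * ((strideSeries r c 0)⁻¹ * strideSeries r c ℓ) := by
    funext ℓ
    rw [← mul_assoc, PowerSeries.mul_inv_cancel _ (by simp [hc0]), one_mul, zero_add]
  rw [hankelMinor, hcols, det_coeffMatrix_mul_left hF0,
    det_coeffMatrix_succ (S := fun ℓ => (strideSeries r c 0)⁻¹ * strideSeries r c ℓ)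
      (PowerSeries.inv_mul_cancel _ (by simp [hc0])), hankelMinor]
  refine det_coeffMatrix_of_sub_smul_mem_span _ _ (fun ℓ => darbouxFactor r c (ℓ % r))
    fun ℓ _ => ?_
  rw [add_comm r ℓ, ← tail_strideSeries, ← map_smul, ← map_sub]
  refine Submodule.span_mono ?_ (Submodule.apply_mem_span_image_of_mem_span tail
    (inv_mul_strideSeries_succ_sub_mem_span hr hc0 hcr ℓ))
  rintro _ ⟨_, ⟨b, hb, rfl⟩, rfl⟩
  exact ⟨b, hb.2, by rw [tail_strideSeries, add_comm]⟩

def IsAdmissible (r : ℕ) (c : ℕ → K) : Prop :=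
  ∀ k, IsNormalized r ((darboux r)^[k] c) ∧ (darboux r)^[k] c r ≠ 0

theorem IsAdmissible.isNormalized (h : IsAdmissible r c) : IsNormalized r c := (h 0).1

theorem IsAdmissible.ne_zero (h : IsAdmissible r c) : c r ≠ 0 := (h 0).2

theorem IsAdmissible.darboux (h : IsAdmissible r c) : IsAdmissible r (darboux r c) := fun k => by
  simpa only [Function.iterate_succ_apply] using h (k + 1)

theorem isAdmissible_of_forall_imp {P : (ℕ → K) → Prop}
    (hP : ∀ c, P c → IsNormalized r c ∧ c r ≠ 0 ∧ P (darboux r c)) (hc : P c) :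
    IsAdmissible r c := by
  intro k
  induction k generalizing c with
  | zero => exact ⟨(hP c hc).1, (hP c hc).2.1⟩
  | succ k ih =>
    rw [Function.iterate_succ_apply]
    exact ih (hP c hc).2.2

theorem prod_darbouxFactor_ne_zero (hcr : c r ≠ 0) (m : ℕ) (f : Fin m → ℕ) :
    ∏ ℓ, darbouxFactor r c (f ℓ) ≠ 0 :=
  Finset.prod_ne_zero_iff.2 fun _ _ => darbouxFactor_ne_zero hcr _

def MinorsNonzero (r : ℕ) (c : ℕ → K) : Prop :=
  ∀ j ≤ r, ∀ m, 1 ≤ m → hankelMinor r c j m ≠ 0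

theorem hankelMinor_ne_zero_of_isAdmissible (hr : 0 < r) (m : ℕ) :
    ∀ {c : ℕ → K}, IsAdmissible r c → ∀ j ≤ r, hankelMinor r c j m ≠ 0 := by
  induction m with
  | zero => intro c _ j _; simp [hankelMinor]
  | succ m ihm =>
    intro c hc j hj
    induction j generalizing c with
    | zero =>
      rw [hankelMinor_zero_succ hr (hc.isNormalized 0 hr) hc.ne_zero]
      exact mul_ne_zero (prod_darbouxFactor_ne_zero hc.ne_zero _ _) (ihm hc.darboux r le_rfl)
    | succ j ihj =>
      rw [hankelMinor_succ_left hr (hc.isNormalized 0 hr) hc.ne_zero (by omega)]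
      exact mul_ne_zero (prod_darbouxFactor_ne_zero hc.ne_zero _ _) (ihj hc.darboux (by omega))

theorem MinorsNonzero.ne_zero (h : MinorsNonzero r c) : c r ≠ 0 := by
  simpa [hankelMinor_one] using h r le_rfl 1 le_rfl

theorem MinorsNonzero.darboux (hr : 0 < r) (hc : IsNormalized r c) (h : MinorsNonzero r c) :
    MinorsNonzero r (darboux r c) := by
  intro j hj m hm
  rcases hj.lt_or_eq with hj | rfl
  · have hmin := h (j + 1) hj m hm
    rw [hankelMinor_succ_left hr (hc 0 hr) h.ne_zero hj] at hmin
    exact right_ne_zero_of_mul hmin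
  · have hmin := h 0 (Nat.zero_le _) (m + 1) (by omega)
    rw [hankelMinor_zero_succ hr (hc 0 hr) h.ne_zero] at hmin
    exact right_ne_zero_of_mul hmin

theorem isAdmissible_iff_minorsNonzero (hr : 0 < r) (hc : IsNormalized r c) :
    IsAdmissible r c ↔ MinorsNonzero r c := by
  refine ⟨fun h j hj m _ => hankelMinor_ne_zero_of_isAdmissible hr m h j hj, fun h => ?_⟩
  refine isAdmissible_of_forall_imp (P := fun c => IsNormalized r c ∧ MinorsNonzero r c)
    (fun c ⟨hc, h⟩ => ?_) ⟨hc, h⟩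
  exact ⟨hc, h.ne_zero, hc.darboux h.ne_zero, h.darboux hr hc⟩

def HasBranchedCF (r : ℕ) (c : ℕ → K) : Prop :=
  ∃ (g : ℕ → K⟦X⟧) (α : ℕ → K),
    (∀ k, PowerSeries.constantCoeff (g k) = 1) ∧ (∀ k, α k ≠ 0) ∧ g 0 = 1 ∧
    (∀ j, 1 ≤ j → j ≤ r → g j = strideSeries r c (j - 1)) ∧
    (∀ k, g (k + 1) - g k = PowerSeries.C (α k) * PowerSeries.X * g (k + r + 1))

theorem HasBranchedCF.ne_zero_and_darboux (hr : 0 < r) (hc : IsNormalized r c)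
    (h : HasBranchedCF r c) : c r ≠ 0 ∧ HasBranchedCF r (darboux r c) := by
  obtain ⟨g, α, hg1, hα, hg0, hgj, hrec⟩ := h
  have hc0 : c 0 = 1 := hc 0 hr
  have hgF0 : g 1 = strideSeries r c 0 := hgj 1 le_rfl hr
  have hFr : strideSeries r c r = α 0 • g (r + 1) := by
    have h0 := hrec 0
    rw [hg0, hgF0, strideSeries_zero_sub_one hc0, zero_add] at h0
    refine mul_left_cancel₀ (PowerSeries.X_ne_zero (R := K)) ?_
    rw [h0, PowerSeries.smul_eq_C_mul]
    ring
  have hα0 : c r = α 0 := by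
    simpa [hg1] using congrArg PowerSeries.constantCoeff hFr
  have hcr : c r ≠ 0 := hα0 ▸ hα 0
  have hgF : ∀ i < r, g (i + 2) = (darbouxFactor r c i)⁻¹ • strideSeries r c (i + 1) := by
    intro i hi
    unfold darbouxFactor
    split_ifs with hir
    · rw [show i + 2 = r + 1 by omega, show i + 1 = r by omega, hFr, hα0, inv_smul_smul₀ (hα 0)]
    · rw [inv_one, one_smul, hgj (i + 2) (by omega) (by omega)]
      rfl
  refine ⟨hcr, fun k => (strideSeries r c 0)⁻¹ * g (k + 1), fun k => α (k + 1),
    fun k => by simp [hg1, hc0], fun k => hα (k + 1), ?_, fun j hj hjr => ?_, fun k => ?_⟩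
  · beta_reduce
    rw [zero_add, hgF0, PowerSeries.inv_mul_cancel _ (by simp [hc0])]
  · beta_reduce
    obtain ⟨i, rfl⟩ : ∃ i, j = i + 1 := ⟨j - 1, by omega⟩
    rw [hgF i (by omega), mul_smul_comm, inv_mul_strideSeries_succ hcr (by omega),
      inv_smul_smul₀ (darbouxFactor_ne_zero hcr i), Nat.add_sub_cancel]
  · beta_reduce
    rw [← mul_sub, hrec (k + 1), show k + 1 + r + 1 = k + r + 1 + 1 by omega]
    ring

def darbouxProduct (r : ℕ) : ℕ → (ℕ → K) → K⟦X⟧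
  | 0, _ => 1
  | k + 1, c => strideSeries r c 0 * darbouxProduct r k (darboux r c)

@[simp] theorem darbouxProduct_zero (c : ℕ → K) : darbouxProduct r 0 c = 1 := rfl

@[simp] theorem darbouxProduct_succ (k : ℕ) (c : ℕ → K) :
    darbouxProduct r (k + 1) c = strideSeries r c 0 * darbouxProduct r k (darboux r c) := rfl

theorem constantCoeff_darbouxProduct (hr : 0 < r) (k : ℕ) {c : ℕ → K} (hc : IsAdmissible r c) :
    PowerSeries.constantCoeff (darbouxProduct r k c) = 1 := by
  induction k generalizing c with
  | zero => simp
  | succ k ih => simp [ih hc.darboux, hc.isNormalized 0 hr]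

theorem darbouxProduct_of_le (hr : 0 < r) {c : ℕ → K} (hc : IsAdmissible r c) {j : ℕ}
    (hj : 1 ≤ j) (hjr : j ≤ r) : darbouxProduct r j c = strideSeries r c (j - 1) := by
  induction j generalizing c with
  | zero => omega
  | succ i ih =>
    rcases Nat.eq_zero_or_pos i with rfl | hi
    · simp
    · have hfac : darbouxFactor r c (i - 1) = 1 := if_neg (by omega)
      have hF := strideSeries_succ (hc.isNormalized 0 hr) hc.ne_zero (show i - 1 < r by omega)
      rw [hfac, one_smul, Nat.sub_add_cancel hi] at hF
      rw [darbouxProduct_succ, ih hc.darboux hi (by omega), Nat.add_sub_cancel, hF]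

theorem darbouxProduct_succ_sub (hr : 0 < r) (k : ℕ) {c : ℕ → K} (hc : IsAdmissible r c) :
    darbouxProduct r (k + 1) c - darbouxProduct r k c =
      PowerSeries.C ((darboux r)^[k] c r) * PowerSeries.X * darbouxProduct r (k + r + 1) c := by
  induction k generalizing c with
  | zero =>
    have hc0 := hc.isNormalized 0 hr
    have hFr := strideSeries_succ hc0 hc.ne_zero (Nat.sub_lt hr one_pos)
    rw [Nat.sub_one_add_one hr.ne', darbouxFactor, if_pos rfl] at hFr
    simp only [zero_add, darbouxProduct_succ, darbouxProduct_zero, mul_one,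
      Function.iterate_zero_apply]
    rw [darbouxProduct_of_le hr hc.darboux hr le_rfl, strideSeries_zero_sub_one hc0, hFr,
      PowerSeries.smul_eq_C_mul]
    ring
  | succ k ih =>
    rw [darbouxProduct_succ, darbouxProduct_succ k c, ← mul_sub, ih hc.darboux,
      show k + 1 + r + 1 = k + r + 1 + 1 by omega, darbouxProduct_succ (k + r + 1),
      Function.iterate_succ_apply]
    ring

theorem hasBranchedCF_of_isAdmissible (hr : 0 < r) (hc : IsAdmissible r c) : HasBranchedCF r c :=
  ⟨fun k => darbouxProduct r k c, fun k => (darboux r)^[k] c r,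
    fun k => constantCoeff_darbouxProduct hr k hc, fun k => (hc k).2, rfl,
    fun _ hj hjr => darbouxProduct_of_le hr hc hj hjr, fun k => darbouxProduct_succ_sub hr k hc⟩

theorem isAdmissible_iff_hasBranchedCF (hr : 0 < r) (hc : IsNormalized r c) :
    IsAdmissible r c ↔ HasBranchedCF r c := by
  refine ⟨hasBranchedCF_of_isAdmissible hr, fun h => ?_⟩
  refine isAdmissible_of_forall_imp (P := fun c => IsNormalized r c ∧ HasBranchedCF r c)
    (fun c ⟨hc, h⟩ => ?_) ⟨hc, h⟩
  obtain ⟨hcr, h'⟩ := h.ne_zero_and_darboux hr hc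
  exact ⟨hc, hcr, hc.darboux hcr, h'⟩

end BranchedContinuedFraction

open BranchedContinuedFraction

def interlacedMoments (r : ℕ) (v : ℕ → LF) (a : ℕ) : ℂ := v (a % r) (Polynomial.X ^ (a / r))

theorem interlacedMoments_add_mul {r i : ℕ} (v : ℕ → LF) (hi : i < r) (n : ℕ) :
    interlacedMoments r v (i + r * n) = v i (Polynomial.X ^ n) := by
  rw [interlacedMoments, Nat.add_mul_mod_self_left, Nat.mod_eq_of_lt hi,
    Nat.add_mul_div_left _ _ (by omega), Nat.div_eq_of_lt hi, zero_add]

theorem momentMatrix_Vsys {r j : ℕ} (v : ℕ → LF) (hr : 0 < r) (hj : j ≤ r) (n ℓ : ℕ) :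
    momentMatrix r (Vsys r j v) n ℓ = interlacedMoments r v (j + ℓ + r * n) := by
  have hℓ := Nat.mod_add_div ℓ r
  have hℓr := Nat.mod_lt ℓ hr
  simp only [momentMatrix, Vsys]
  split_ifs with h
  · rw [show j + ℓ + r * n = j + ℓ % r + r * (ℓ / r + n) by rw [mul_add]; omega,
      interlacedMoments_add_mul v h]
  · rw [show j + ℓ + r * n = j + ℓ % r - r + r * (ℓ / r + n + 1) by rw [mul_add, mul_add]; omega,
      interlacedMoments_add_mul v (by omega), xMul, LinearMap.comp_apply, LinearMap.mulLeft_apply,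
      ← pow_succ']

theorem Delta_Vsys {r j : ℕ} (v : ℕ → LF) (hr : 0 < r) (hj : j ≤ r) (m : ℕ) :
    Delta r (Vsys r j v) m = hankelMinor r (interlacedMoments r v) j m := by
  unfold Delta hankelMinor coeffMatrix
  congr 1
  ext n ℓ
  rw [Matrix.of_apply, Matrix.of_apply, momentMatrix_Vsys v hr hj, coeff_strideSeries]

theorem mk_eq_strideSeries_interlacedMoments {r i : ℕ} (v : ℕ → LF) (hi : i < r) :
    (PowerSeries.mk fun n => v i (Polynomial.X ^ n)) =
      strideSeries r (interlacedMoments r v) i := by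
  ext n
  rw [coeff_mk, coeff_strideSeries, interlacedMoments_add_mul v hi]

theorem isNormalized_interlacedMoments {r : ℕ} {v : ℕ → LF}
    (hv : ∀ j, j < r → v j (1 : Polynomial ℂ) = 1) : IsNormalized r (interlacedMoments r v) :=
  fun i hi => by
    have h := interlacedMoments_add_mul v hi 0
    rw [mul_zero, add_zero, pow_zero] at h
    exact h.trans (hv i hi)

theorem stmt12 (r : ℕ) (hr : 1 ≤ r) (v : ℕ → LF)
    (hv : ∀ j, j < r → v j (1 : Polynomial ℂ) = 1) :
    -- (i) existence of the power series `g_k` and nonzero coefficients `α_k`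
    (∃ (g : ℕ → PowerSeries ℂ) (α : ℕ → ℂ),
      (∀ k, PowerSeries.constantCoeff (g k) = 1) ∧
      (∀ k, α k ≠ 0) ∧
      g 0 = 1 ∧
      (∀ j, 1 ≤ j → j ≤ r →
        g j = PowerSeries.mk fun n => v (j - 1) (Polynomial.X ^ n)) ∧
      (∀ k, g (k + 1) - g k = PowerSeries.C (α k) * PowerSeries.X * g (k + r + 1)))
    ↔
    -- (ii) all leading principal minors of the moment matrices of the
    -- systems `V^{[j]}`, `0 ≤ j ≤ r`, are nonzero
    (∀ j, j ≤ r → ∀ m, 1 ≤ m → Delta r (Vsys r j v) m ≠ 0) := by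
  set c := interlacedMoments r v
  have hc : IsNormalized r c := isNormalized_interlacedMoments hv
  have hinit : ∀ g : ℕ → PowerSeries ℂ,
      (∀ j, 1 ≤ j → j ≤ r → g j = PowerSeries.mk fun n => v (j - 1) (Polynomial.X ^ n)) ↔
        ∀ j, 1 ≤ j → j ≤ r → g j = strideSeries r c (j - 1) := fun g =>
    forall₂_congr fun j _ => forall_congr' fun hjr => by
      rw [mk_eq_strideSeries_interlacedMoments (r := r) v (by omega)]
  have hminors : (∀ j, j ≤ r → ∀ m, 1 ≤ m → Delta r (Vsys r j v) m ≠ 0) ↔ MinorsNonzero r c :=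
    forall₂_congr fun j hj => by simp only [Delta_Vsys v hr hj, c]
  simp only [hinit, hminors]
  exact (isAdmissible_iff_hasBranchedCF hr hc).symm.trans (isAdmissible_iff_minorsNonzero hr hc)
end
end
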